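/- arXiv:0810.3456 — 3 statements merged into one kernel-verified Lean document; each statement's English description precedes it below -/
import Mathlib

section
/- Let f : ℂ → ℂ be analytic on the strip |Im v| ≤ A with |f(v)| ≤ B/(1+|v|^α) there, for some α > 1, and assume ∫_{ℝ ± iδ} f'(w) dw = 0 for 0 < δ < A. Define ψ_±(η) = ∫_{C_{±δ}} f'(w)/(η ± w) dw where C_{±δ} = ℝ ± iδ. Then ψ_± is analytic on the half-plane {Im η > −δ}. -/
open MeasureTheory Metric Complex

lemma aux_rpow {α r u z : ℝ} (hα : 0 < α) (hr : 0 ≤ r) (hu : 0 ≤ u) (hz : 0 ≤ z)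
    (h : u ≤ z + r) : (1 + u) ^ α ≤ (2 * (1 + r)) ^ α * (1 + z ^ α) := by
  have h1 : (1 + u) ^ α ≤ ((1 + r) * (1 + z)) ^ α :=
    Real.rpow_le_rpow (by linarith) (by nlinarith) hα.le
  have h2 : (1 + z) ^ α ≤ 2 ^ α * (1 + z ^ α) := by
    have hle : (1 + z) ^ α ≤ (2 * max 1 z) ^ α := by
      apply Real.rpow_le_rpow (by linarith) ?_ hα.le
      rcases le_total z 1 with hz1 | hz1
      · rw [max_eq_left hz1]; linarith
      · rw [max_eq_right hz1]; linarith
    refine hle.trans ?_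
    rw [Real.mul_rpow (by norm_num) (le_max_of_le_left zero_le_one)]
    apply mul_le_mul_of_nonneg_left ?_ (Real.rpow_nonneg (by norm_num) _)
    rcases le_total z 1 with hz1 | hz1
    · rw [max_eq_left hz1, Real.one_rpow]
      have : 0 ≤ z ^ α := Real.rpow_nonneg hz _
      linarith
    · rw [max_eq_right hz1]; linarith
  calc (1 + u) ^ α ≤ ((1 + r) * (1 + z)) ^ α := h1
    _ = (1 + r) ^ α * (1 + z) ^ α := Real.mul_rpow (by linarith) (by linarith)
    _ ≤ (1 + r) ^ α * (2 ^ α * (1 + z ^ α)) := by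
        have : 0 ≤ (1 + r) ^ α := Real.rpow_nonneg (by linarith) _
        nlinarith [Real.rpow_nonneg (show (0:ℝ) ≤ 1 + z by linarith) α]
    _ = (2 * (1 + r)) ^ α * (1 + z ^ α) := by
        rw [Real.mul_rpow (by norm_num) (by linarith)]; ring

lemma deriv_decay (f : ℂ → ℂ) (A B α δ : ℝ) (hα : 1 < α) (hδ : 0 < δ) (hδA : δ < A)
    (hanal : DifferentiableOn ℂ f {z : ℂ | |z.im| ≤ A})
    (hbound : ∀ z : ℂ, |z.im| ≤ A → ‖f z‖ ≤ B / (1 + ‖z‖ ^ α))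
    (hB : 0 ≤ B)
    (σ : ℝ) (hσ : σ = 1 ∨ σ = -1) (u : ℝ) :
    ‖deriv f ((u : ℂ) + ((σ * δ : ℝ) : ℂ) * Complex.I)‖ ≤
      (B * (2 * (1 + (A - δ) / 2)) ^ α / ((A - δ) / 2)) * (1 + |u|) ^ (-α) := by
  have habsσ : |σ| = 1 := by rcases hσ with h | h <;> simp [h]
  set r : ℝ := (A - δ) / 2 with hr
  have hrpos : 0 < r := by rw [hr]; linarith
  set w : ℂ := (u : ℂ) + ((σ * δ : ℝ) : ℂ) * Complex.I with hw
  have hwim : w.im = σ * δ := by simp [hw]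
  have hwre : w.re = u := by simp [hw]
  set K : ℝ := (2 * (1 + r)) ^ α with hK
  have hKpos : 0 < K := Real.rpow_pos_of_pos (by linarith) _
  set C : ℝ := B * K * (1 + |u|) ^ (-α) with hC
  have hsub2 : closedBall w r ⊆ {z : ℂ | |z.im| ≤ A} := by
    intro z hz
    rw [mem_closedBall] at hz
    have h1 : |z.im - w.im| ≤ r := by
      calc |z.im - w.im| = |(z - w).im| := by simp
        _ ≤ ‖z - w‖ := Complex.abs_im_le_norm _
        _ ≤ r := by rw [← dist_eq_norm]; exact hz
    have h2 : |w.im| = δ := by rw [hwim, abs_mul, habsσ, one_mul, abs_of_pos hδ]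
    simp only [Set.mem_setOf_eq]
    have : |z.im| ≤ δ + r := by
      calc |z.im| = |w.im + (z.im - w.im)| := by ring_nf
        _ ≤ |w.im| + |z.im - w.im| := abs_add_le _ _
        _ ≤ δ + r := by rw [h2]; linarith
    linarith [this, show δ + r ≤ A by rw [hr]; linarith]
  have hd : DiffContOnCl ℂ f (ball w r) :=
    (hanal.mono (closure_ball_subset_closedBall.trans hsub2)).diffContOnCl
  have hC' : ∀ z ∈ sphere w r, ‖f z‖ ≤ C := by
    intro z hz
    have hzA : |z.im| ≤ A := hsub2 (sphere_subset_closedBall hz)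
    rw [mem_sphere_iff_norm] at hz
    have hu_le : |u| ≤ ‖z‖ + r := by
      have h1 : |u| ≤ ‖w‖ := by rw [← hwre]; exact Complex.abs_re_le_norm w
      have h2 : ‖w‖ ≤ ‖z‖ + ‖w - z‖ := by
        simpa using norm_add_le z (w - z)
      have h3 : ‖w - z‖ = r := by
        rw [← hz]; exact norm_sub_rev w z
      linarith
    have key : (1 + |u|) ^ α ≤ K * (1 + ‖z‖ ^ α) :=
      aux_rpow (by linarith) hrpos.le (abs_nonneg u) (norm_nonneg z) hu_le
    have hfz := hbound z hzA
    have hpos1 : (0:ℝ) < 1 + ‖z‖ ^ α := by positivity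
    have hpos2 : (0:ℝ) < (1 + |u|) ^ α := Real.rpow_pos_of_pos (by positivity) _
    rw [hC, Real.rpow_neg (by positivity), ← div_eq_mul_inv]
    refine hfz.trans ?_
    rw [div_le_div_iff₀ hpos1 hpos2]
    calc B * (1 + |u|) ^ α ≤ B * (K * (1 + ‖z‖ ^ α)) :=
          mul_le_mul_of_nonneg_left key hB
      _ = B * K * (1 + ‖z‖ ^ α) := by ring
  have hcauchy := Complex.norm_deriv_le_of_forall_mem_sphere_norm_le hrpos hd hC'
  refine hcauchy.trans (le_of_eq ?_)
  rw [hC]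
  field_simp


/-- analyticity of ψ_±(η) = ∫_{C_{±δ}} f'(w)/(η ± w) dw on the
half-plane {Im η > −δ}. The contour C_{±δ} = ℝ ± iδ is parametrized by
w = u ± iδ, and the sign σ = ±1. -/
theorem psi_analytic
    (f : ℂ → ℂ) (A B α δ : ℝ) (hα : 1 < α) (hδ : 0 < δ) (hδA : δ < A)
    (hanal : DifferentiableOn ℂ f {z : ℂ | |z.im| ≤ A})
    (hbound : ∀ z : ℂ, |z.im| ≤ A → ‖f z‖ ≤ B / (1 + ‖z‖ ^ α))
    (hzero : ∀ σ : ℝ, (σ = 1 ∨ σ = -1) →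
      ∫ u : ℝ, deriv f ((u : ℂ) + ((σ * δ : ℝ) : ℂ) * Complex.I) = 0) :
    ∀ σ : ℝ, (σ = 1 ∨ σ = -1) →
      DifferentiableOn ℂ
        (fun η : ℂ => ∫ u : ℝ,
          deriv f ((u : ℂ) + ((σ * δ : ℝ) : ℂ) * Complex.I) /
            (η + (σ : ℂ) * ((u : ℂ) + ((σ * δ : ℝ) : ℂ) * Complex.I)))
        {η : ℂ | -δ < η.im} := by
  intro σ hσ
  have hσ2 : σ * σ = 1 := by rcases hσ with h | h <;> simp [h]
  have hB : 0 ≤ B := by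
    have h0 : |(0 : ℂ).im| ≤ A := by simp; linarith
    have := hbound 0 h0
    have h0' : ‖(0:ℂ)‖ ^ α = 0 := by
      simp [Real.zero_rpow (by positivity : α ≠ 0)]
    rw [h0'] at this
    simpa using (norm_nonneg (f 0)).trans this
  -- notation
  set g : ℝ → ℂ := fun u => deriv f ((u : ℂ) + ((σ * δ : ℝ) : ℂ) * Complex.I) with hg
  set c : ℝ → ℂ := fun u => (σ : ℂ) * ((u : ℂ) + ((σ * δ : ℝ) : ℂ) * Complex.I) with hcdef
  have hcim : ∀ u : ℝ, (c u).im = δ := by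
    intro u
    rcases hσ with h | h <;> simp [hcdef, h]
  have hccont : Continuous c := by
    rw [hcdef]
    exact continuous_const.mul (Complex.continuous_ofReal.add continuous_const)
  -- continuity of g
  have hgcont : Continuous g := by
    have hUopen : IsOpen {z : ℂ | |z.im| < A} := by
      have he : {z : ℂ | |z.im| < A} = (fun z : ℂ => |z.im|) ⁻¹' Set.Iio A := rfl
      rw [he]
      exact (continuous_abs.comp Complex.continuous_im).isOpen_preimage _ isOpen_Iio
    have hfa : AnalyticOnNhd ℂ f {z : ℂ | |z.im| < A} :=
      DifferentiableOn.analyticOnNhd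
        (hanal.mono (fun z (hz : |z.im| < A) => hz.le)) hUopen
    have hderiv : AnalyticOnNhd ℂ (deriv f) {z : ℂ | |z.im| < A} := hfa.deriv
    have hmap : Continuous fun u : ℝ => (u : ℂ) + ((σ * δ : ℝ) : ℂ) * Complex.I := by
      continuity
    refine (hderiv.continuousOn).comp_continuous hmap ?_
    intro u
    have habsσ : |σ| = 1 := by rcases hσ with h | h <;> simp [h]
    simp only [Set.mem_setOf_eq]
    have : ((u : ℂ) + ((σ * δ : ℝ) : ℂ) * Complex.I).im = σ * δ := by simp
    rw [this, abs_mul, habsσ, one_mul, abs_of_pos hδ]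
    exact hδA
  -- integrability of g
  set Cst : ℝ := B * (2 * (1 + (A - δ) / 2)) ^ α / ((A - δ) / 2) with hCst
  have hg_int : Integrable g := by
    refine Integrable.mono' (g := fun u : ℝ => Cst * (1 + ‖u‖) ^ (-α)) ?_
      hgcont.aestronglyMeasurable ?_
    · exact (integrable_one_add_norm (by simpa using hα)).const_mul Cst
    · refine Filter.Eventually.of_forall fun u => ?_
      simp only [Real.norm_eq_abs]
      exact deriv_decay f A B α δ hα hδ hδA hanal hbound hB σ hσ u
  -- main differentiability
  intro η₀ hη₀
  apply DifferentiableAt.differentiableWithinAt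
  simp only [Set.mem_setOf_eq] at hη₀
  set ε : ℝ := (η₀.im + δ) / 2 with hε
  have hεpos : 0 < ε := by rw [hε]; linarith
  have hlow : ∀ η ∈ ball η₀ ε, ∀ u : ℝ, ε ≤ ‖η + c u‖ := by
    intro η hη u
    have h1 : |(η - η₀).im| ≤ ‖η - η₀‖ := Complex.abs_im_le_norm _
    rw [mem_ball, Complex.dist_eq] at hη
    have h2 : η₀.im - ε ≤ η.im := by
      have := abs_le.1 (h1.trans hη.le) |>.1
      simp only [Complex.sub_im] at this
      linarith
    have h3 : ε ≤ (η + c u).im := by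
      rw [Complex.add_im, hcim u]
      rw [hε] at *
      linarith
    calc ε ≤ (η + c u).im := h3
      _ ≤ |(η + c u).im| := le_abs_self _
      _ ≤ ‖η + c u‖ := Complex.abs_im_le_norm _
  have hne : ∀ η ∈ ball η₀ ε, ∀ u : ℝ, η + c u ≠ 0 := by
    intro η hη u h0
    have := hlow η hη u
    rw [h0] at this
    simp at this
    linarith
  set F : ℂ → ℝ → ℂ := fun η u => g u / (η + c u) with hF
  set F' : ℂ → ℝ → ℂ := fun η u => g u * (-1 / (η + c u) ^ 2) with hF'
  have key := hasDerivAt_integral_of_dominated_loc_of_deriv_le (μ := volume)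
    (F := F) (F' := F') (x₀ := η₀) (bound := fun u => ‖g u‖ / ε ^ 2) (ball_mem_nhds η₀ hεpos)
    ?_ ?_ ?_ ?_ ?_ ?_
  · exact key.2.differentiableAt
  · -- hF_meas
    refine Filter.eventually_of_mem (ball_mem_nhds η₀ hεpos) fun η hη => ?_
    exact (Continuous.div hgcont (continuous_const.add hccont)
      (fun u => hne η hη u)).aestronglyMeasurable
  · -- hF_int
    refine Integrable.mono' (g := fun u : ℝ => ‖g u‖ / ε) (hg_int.norm.div_const ε)
      ((Continuous.div hgcont (continuous_const.add hccont)
        (fun u => hne η₀ (mem_ball_self hεpos) u)).aestronglyMeasurable) ?_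
    refine Filter.Eventually.of_forall fun u => ?_
    rw [hF]
    simp only [norm_div]
    exact div_le_div_of_nonneg_left (norm_nonneg _) hεpos
      (by exact hlow η₀ (mem_ball_self hεpos) u)
  · -- hF'_meas
    exact (Continuous.mul hgcont (Continuous.div continuous_const
      (Continuous.pow (continuous_const.add hccont) 2)
      (fun u => pow_ne_zero 2 (hne η₀ (mem_ball_self hεpos) u)))).aestronglyMeasurable
  · -- h_bound
    refine Filter.Eventually.of_forall fun u => fun η hη => ?_
    rw [hF']
    simp only [norm_mul, norm_div, norm_neg, norm_one, norm_pow]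
    rw [one_div, ← div_eq_mul_inv]
    have hsq : ε ^ 2 ≤ ‖η + c u‖ ^ 2 := by
      apply pow_le_pow_left₀ hεpos.le
      exact hlow η hη u
    exact div_le_div_of_nonneg_left (norm_nonneg _) (by positivity) hsq
  · -- bound integrable
    exact hg_int.norm.div_const _
  · -- h_diff
    refine Filter.Eventually.of_forall fun u => fun η hη => ?_
    have h1 : HasDerivAt (fun η : ℂ => η + c u) 1 η := (hasDerivAt_id η).add_const (c u)
    have h2 : HasDerivAt (fun η : ℂ => (η + c u)⁻¹) (-1 / (η + c u) ^ 2) η :=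
      h1.inv (hne η hη u)
    have h3 := h2.const_mul (g u)
    rw [hF, hF']
    simp only [div_eq_mul_inv] at h3 ⊢
    convert h3 using 2 <;> ring
end

section
/- Let f : ℝ → ℂ be continuous with |f(v)| ≤ B/(1+|v|^α), α > 1, α ≠ 2. For −1 ≤ t < 0 and |z| ≤ π define S(z,t) = Σ_{ℓ≠0}[f((z+2πℓ)/t) − f(2πℓ/t)] + (z/2π) Σ_{ℓ∈ℤ} f(2π(ℓ+1)/t) − (t/2π) Σ_{ℓ∈ℤ} ∫_{2πℓ/t}^{2π(ℓ+1)/t} f(w) dw. Then all sums converge absolutely and |S(z,t)| ≤ C uniformly in z and t, with C depending only on B and α. -/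
open Real MeasureTheory Set

lemma aux_summable (α : ℝ) (hα : 1 < α) (a : ℤ) :
    Summable (fun n : ℤ => (1 + |(n : ℝ) + (a : ℝ)| ^ α)⁻¹) := by
  have hα0 : (0:ℝ) < α := lt_trans one_pos hα
  have h1 : Summable (fun n : ℤ => 1 / |(n : ℝ) + (a : ℝ)| ^ α) :=
    (Real.summable_one_div_int_add_rpow a α).mpr hα
  have h2 : Summable (fun n : ℤ => if n = -a then (1:ℝ) else 0) :=
    (hasSum_ite_eq (-a) (1:ℝ)).summable
  refine Summable.of_nonneg_of_le (fun n => by positivity) ?_ (h1.add h2)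
  intro n
  by_cases hn : n = -a
  · subst hn
    simp [Real.zero_rpow (ne_of_gt hα0)]
  · have hx : (1:ℝ) ≤ |(n:ℝ) + a| := by
      have h0 : n + a ≠ 0 := by omega
      have := Int.one_le_abs h0
      calc (1:ℝ) ≤ |((n + a : ℤ) : ℝ)| := by exact_mod_cast this
        _ = |(n:ℝ) + a| := by push_cast; ring_nf
    have hy : (1:ℝ) ≤ |(n:ℝ) + a| ^ α := by
      calc (1:ℝ) = 1 ^ α := (Real.one_rpow α).symm
        _ ≤ |(n:ℝ) + a| ^ α := Real.rpow_le_rpow zero_le_one hx hα0.le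
    have : (1 + |(n:ℝ) + a| ^ α)⁻¹ ≤ 1 / |(n:ℝ) + a| ^ α := by
      rw [one_div]
      apply inv_anti₀ (by linarith) (by linarith)
    simp only [hn, if_false, add_zero]
    exact this

lemma g_integrable (B α : ℝ) (hα : 1 < α) (hB : 0 < B) :
    Integrable (fun v : ℝ => B / (1 + |v| ^ α)) := by
  have hα0 : (0:ℝ) < α := lt_trans one_pos hα
  have hcont : Continuous (fun v : ℝ => B / (1 + |v| ^ α)) := by
    apply Continuous.div continuous_const
    · exact continuous_const.add (continuous_abs.rpow_const (fun x => Or.inr hα0.le))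
    · intro x; positivity
  have hIoi : IntegrableOn (fun v : ℝ => B / (1 + |v| ^ α)) (Ioi 1) := by
    have hrp : IntegrableOn (fun x : ℝ => B * x ^ (-α)) (Ioi 1) :=
      (integrableOn_Ioi_rpow_of_lt (by linarith) one_pos).const_mul B
    refine Integrable.mono' hrp hcont.aestronglyMeasurable ?_
    filter_upwards [ae_restrict_mem measurableSet_Ioi] with x hx
    have hx1 : (1:ℝ) < x := hx
    have hxpos : (0:ℝ) < x := by linarith
    have habs : |x| = x := abs_of_pos hxpos
    have hxa : (0:ℝ) < x ^ α := Real.rpow_pos_of_pos hxpos α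
    rw [Real.norm_eq_abs, abs_of_nonneg (by positivity), habs, Real.rpow_neg hxpos.le]
    rw [← div_eq_mul_inv]
    exact div_le_div_of_nonneg_left hB.le hxa (by linarith)
  have hIio : IntegrableOn (fun v : ℝ => B / (1 + |v| ^ α)) (Iio (-1)) := by
    rw [← (Measure.measurePreserving_neg (volume : Measure ℝ)).integrableOn_comp_preimage
        (Homeomorph.neg ℝ).measurableEmbedding]
    simp only [Function.comp_def, neg_preimage, neg_Iio, neg_neg, abs_neg]
    exact hIoi
  have hIcc : IntegrableOn (fun v : ℝ => B / (1 + |v| ^ α)) (Icc (-1) 1) :=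
    hcont.integrableOn_Icc
  have huniv : Iio (-1:ℝ) ∪ (Icc (-1) 1 ∪ Ioi 1) = univ := by
    ext x
    simp only [mem_union, mem_Iio, mem_Icc, mem_Ioi, mem_univ, iff_true]
    rcases lt_or_ge x (-1) with h | h
    · exact Or.inl h
    · rcases le_or_gt x 1 with h' | h'
      · exact Or.inr (Or.inl ⟨h, h'⟩)
      · exact Or.inr (Or.inr h')
  have := (hIio.union (hIcc.union hIoi))
  rwa [huniv, integrableOn_univ] at this

/-- the lattice sums defining the remainder in the self-similar
structure of the fundamental solution converge absolutely and are uniformly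
bounded for −1 ≤ t < 0, |z| ≤ π. -/
theorem remainder_lattice_sums_bounded
    (f : ℝ → ℂ) (B α : ℝ) (hα : 1 < α) (hα2 : α ≠ 2) (hB : 0 < B)
    (hcont : Continuous f) (hb : ∀ v : ℝ, ‖f v‖ ≤ B / (1 + |v| ^ α)) :
    ∃ C > 0, ∀ t z : ℝ, -1 ≤ t → t < 0 → |z| ≤ π →
      Summable (fun ℓ : {ℓ : ℤ // ℓ ≠ 0} =>
        ‖f ((z + 2 * π * (ℓ.1 : ℝ)) / t) - f (2 * π * (ℓ.1 : ℝ) / t)‖) ∧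
      Summable (fun ℓ : ℤ => ‖f (2 * π * ((ℓ : ℝ) + 1) / t)‖) ∧
      Summable (fun ℓ : ℤ =>
        ‖∫ v in (2 * π * (ℓ : ℝ) / t)..(2 * π * ((ℓ : ℝ) + 1) / t), f v‖) ∧
      ‖(∑' ℓ : {ℓ : ℤ // ℓ ≠ 0},
            (f ((z + 2 * π * (ℓ.1 : ℝ)) / t) - f (2 * π * (ℓ.1 : ℝ) / t)))
          + (z / (2 * π)) • ∑' ℓ : ℤ, f (2 * π * ((ℓ : ℝ) + 1) / t)
          - (t / (2 * π)) • ∑' ℓ : ℤ,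
              ∫ v in (2 * π * (ℓ : ℝ) / t)..(2 * π * ((ℓ : ℝ) + 1) / t), f v‖ ≤ C := by
  have hα0 : (0:ℝ) < α := lt_trans one_pos hα
  set g : ℝ → ℝ := fun v => B / (1 + |v| ^ α) with hgdef
  have hgint : Integrable g := g_integrable B α hα hB
  have hgnn : ∀ v, 0 ≤ g v := fun v => by simp only [hgdef]; positivity
  -- master bound
  have hfb : ∀ u m : ℝ, 0 ≤ m → m ≤ |u| → ‖f u‖ ≤ B * (1 + m ^ α)⁻¹ := by
    intro u m hm hmu
    rw [← div_eq_mul_inv]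
    refine (hb u).trans ?_
    have h1 : m ^ α ≤ |u| ^ α := Real.rpow_le_rpow hm hmu hα0.le
    exact div_le_div_of_nonneg_left hB.le (by positivity) (by linarith)
  -- summable weights
  have hW : Summable (fun n : ℤ => (1 + |(n:ℝ)| ^ α)⁻¹) := by
    simpa using aux_summable α hα 0
  have hW1 : Summable (fun n : ℤ => (1 + |(n:ℝ) + 1| ^ α)⁻¹) := by
    simpa using aux_summable α hα 1
  have hWnn : ∀ n : ℤ, (0:ℝ) ≤ (1 + |(n:ℝ)| ^ α)⁻¹ := fun n => by positivity
  have hW1nn : ∀ n : ℤ, (0:ℝ) ≤ (1 + |(n:ℝ) + 1| ^ α)⁻¹ := fun n => by positivity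
  set W : ℝ := ∑' n : ℤ, (1 + |(n:ℝ)| ^ α)⁻¹ with hWdef
  set W1 : ℝ := ∑' n : ℤ, (1 + |(n:ℝ) + 1| ^ α)⁻¹ with hW1def
  set I : ℝ := ∫ v, g v with hIdef
  have hWpos : 0 ≤ W := tsum_nonneg hWnn
  have hW1pos : 0 ≤ W1 := tsum_nonneg hW1nn
  have hIpos : 0 ≤ I := integral_nonneg hgnn
  refine ⟨2 * B * W + B * W1 + I + 1, by nlinarith, ?_⟩
  intro t z ht0 ht1 hz
  have htne : t ≠ 0 := ne_of_lt ht1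
  have htabs : |t| ≤ 1 := abs_le.mpr ⟨ht0, by linarith⟩
  have hdivt : ∀ u : ℝ, |u| ≤ |u / t| := by
    intro u
    rw [abs_div, le_div_iff₀ (abs_pos.mpr htne)]
    exact mul_le_of_le_one_right (abs_nonneg u) htabs
  have hpi : (3:ℝ) < π := pi_gt_three
  -- argument lower bounds
  have ha2 : ∀ ℓ : ℤ, |(ℓ:ℝ)| ≤ |2 * π * (ℓ:ℝ) / t| := by
    intro ℓ
    refine le_trans ?_ (hdivt _)
    rw [abs_mul, abs_of_pos (by positivity : (0:ℝ) < 2 * π)]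
    nlinarith [abs_nonneg ((ℓ:ℝ))]
  have ha3 : ∀ ℓ : ℤ, |(ℓ:ℝ) + 1| ≤ |2 * π * ((ℓ:ℝ) + 1) / t| := by
    intro ℓ
    refine le_trans ?_ (hdivt _)
    rw [abs_mul, abs_of_pos (by positivity : (0:ℝ) < 2 * π)]
    nlinarith [abs_nonneg ((ℓ:ℝ) + 1)]
  have ha1 : ∀ ℓ : ℤ, ℓ ≠ 0 → |(ℓ:ℝ)| ≤ |(z + 2 * π * (ℓ:ℝ)) / t| := by
    intro ℓ hℓ
    refine le_trans ?_ (hdivt _)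
    have hL : (1:ℝ) ≤ |(ℓ:ℝ)| := by
      have := Int.one_le_abs hℓ
      calc (1:ℝ) ≤ ((|ℓ| : ℤ) : ℝ) := by exact_mod_cast this
        _ = |(ℓ:ℝ)| := by push_cast; ring
    have h3 : |(2 * π * (ℓ:ℝ))| - |(-z)| ≤ |2 * π * (ℓ:ℝ) - (-z)| :=
      abs_sub_abs_le_abs_sub _ _
    rw [abs_neg, sub_neg_eq_add] at h3
    have h4 : |2 * π * (ℓ:ℝ) + z| = |z + 2 * π * (ℓ:ℝ)| := by rw [add_comm]
    rw [h4] at h3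
    rw [abs_mul, abs_of_pos (by positivity : (0:ℝ) < 2 * π)] at h3
    nlinarith
  -- bounds for the three families
  have b1 : ∀ ℓ : {ℓ : ℤ // ℓ ≠ 0},
      ‖f ((z + 2 * π * (ℓ.1 : ℝ)) / t) - f (2 * π * (ℓ.1 : ℝ) / t)‖
        ≤ 2 * B * (1 + |(ℓ.1:ℝ)| ^ α)⁻¹ := by
    intro ℓ
    calc ‖f ((z + 2 * π * (ℓ.1 : ℝ)) / t) - f (2 * π * (ℓ.1 : ℝ) / t)‖
        ≤ ‖f ((z + 2 * π * (ℓ.1 : ℝ)) / t)‖ + ‖f (2 * π * (ℓ.1 : ℝ) / t)‖ :=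
          norm_sub_le _ _
      _ ≤ B * (1 + |(ℓ.1:ℝ)| ^ α)⁻¹ + B * (1 + |(ℓ.1:ℝ)| ^ α)⁻¹ :=
          add_le_add (hfb _ _ (abs_nonneg _) (ha1 ℓ.1 ℓ.2)) (hfb _ _ (abs_nonneg _) (ha2 ℓ.1))
      _ = 2 * B * (1 + |(ℓ.1:ℝ)| ^ α)⁻¹ := by ring
  have b2 : ∀ ℓ : ℤ, ‖f (2 * π * ((ℓ:ℝ) + 1) / t)‖ ≤ B * (1 + |(ℓ:ℝ) + 1| ^ α)⁻¹ :=
    fun ℓ => hfb _ _ (abs_nonneg _) (ha3 ℓ)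
  -- summability of sums 1 and 2
  have hM1 : Summable (fun ℓ : {ℓ : ℤ // ℓ ≠ 0} => 2 * B * (1 + |(ℓ.1:ℝ)| ^ α)⁻¹) :=
    (hW.mul_left (2 * B)).comp_injective Subtype.coe_injective
  have sum1 : Summable (fun ℓ : {ℓ : ℤ // ℓ ≠ 0} =>
      ‖f ((z + 2 * π * (ℓ.1 : ℝ)) / t) - f (2 * π * (ℓ.1 : ℝ) / t)‖) :=
    Summable.of_nonneg_of_le (fun _ => norm_nonneg _) b1 hM1
  have sum2 : Summable (fun ℓ : ℤ => ‖f (2 * π * ((ℓ : ℝ) + 1) / t)‖) :=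
    Summable.of_nonneg_of_le (fun _ => norm_nonneg _) b2 (hW1.mul_left B)
  -- the intervals
  set S : ℤ → Set ℝ := fun ℓ => Ioc (2 * π * ((ℓ:ℝ) + 1) / t) (2 * π * (ℓ:ℝ) / t) with hSdef
  have hmono : ∀ a b : ℝ, a ≤ b → b / t ≤ a / t := by
    intro a b hab
    rw [div_eq_mul_inv, div_eq_mul_inv]
    exact mul_le_mul_of_nonpos_right hab (inv_nonpos.mpr ht1.le)
  have hcc : ∀ ℓ : ℤ, 2 * π * ((ℓ:ℝ) + 1) / t < 2 * π * (ℓ:ℝ) / t := by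
    intro ℓ
    have h : 2 * π * (ℓ:ℝ) < 2 * π * ((ℓ:ℝ) + 1) := by nlinarith
    have := div_lt_div_of_neg_of_lt ht1 h
    · exact this
  have hmeas : ∀ ℓ : ℤ, MeasurableSet (S ℓ) := fun ℓ => measurableSet_Ioc
  have hdisj : Pairwise (Function.onFun Disjoint S) := by
    have key : ∀ i j : ℤ, i < j → Disjoint (S i) (S j) := by
      intro i j hij
      rw [hSdef]
      rw [Set.Ioc_disjoint_Ioc]
      have h1 : 2 * π * ((j:ℝ)) / t ≤ 2 * π * ((i:ℝ) + 1) / t := by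
        apply hmono
        have : ((i:ℝ) + 1) ≤ (j:ℝ) := by exact_mod_cast hij
        nlinarith
      calc min (2 * π * (i:ℝ) / t) (2 * π * (j:ℝ) / t)
          ≤ 2 * π * (j:ℝ) / t := min_le_right _ _
        _ ≤ 2 * π * ((i:ℝ) + 1) / t := h1
        _ ≤ max (2 * π * ((i:ℝ) + 1) / t) (2 * π * ((j:ℝ) + 1) / t) := le_max_left _ _
    intro i j hij
    rcases hij.lt_or_gt with h | h
    · exact key i j h
    · exact (key j i h).symm
  have hIoc : ∀ ℓ : ℤ, Set.uIoc (2 * π * (ℓ:ℝ) / t) (2 * π * ((ℓ:ℝ) + 1) / t) = S ℓ := by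
    intro ℓ
    rw [Set.uIoc_comm, Set.uIoc_of_le (hcc ℓ).le]
  set D : ℤ → ℝ := fun ℓ => ∫ v in S ℓ, g v with hDdef
  have hHS : HasSum D (∫ v in ⋃ ℓ, S ℓ, g v) :=
    hasSum_integral_iUnion hmeas hdisj hgint.integrableOn
  have hDsum : Summable D := hHS.summable
  have hDnn : ∀ ℓ, 0 ≤ D ℓ := fun ℓ => setIntegral_nonneg (hmeas ℓ) (fun x _ => hgnn x)
  have hDle : ∑' ℓ, D ℓ ≤ I := by
    rw [hHS.tsum_eq]
    exact setIntegral_le_integral hgint (Filter.Eventually.of_forall hgnn)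
  have b3 : ∀ ℓ : ℤ,
      ‖∫ v in (2 * π * (ℓ : ℝ) / t)..(2 * π * ((ℓ : ℝ) + 1) / t), f v‖ ≤ D ℓ := by
    intro ℓ
    calc ‖∫ v in (2 * π * (ℓ : ℝ) / t)..(2 * π * ((ℓ : ℝ) + 1) / t), f v‖
        ≤ ∫ v in Set.uIoc (2 * π * (ℓ:ℝ) / t) (2 * π * ((ℓ:ℝ) + 1) / t), ‖f v‖ :=
          intervalIntegral.norm_integral_le_integral_norm_uIoc
      _ = ∫ v in S ℓ, ‖f v‖ := by rw [hIoc ℓ]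
      _ ≤ ∫ v in S ℓ, g v := by
          apply setIntegral_mono_on
          · exact (hcont.norm.integrableOn_Icc).mono_set Set.Ioc_subset_Icc_self
          · exact hgint.integrableOn
          · exact hmeas ℓ
          · exact fun x _ => hb x
      _ = D ℓ := rfl
  have sum3 : Summable (fun ℓ : ℤ =>
      ‖∫ v in (2 * π * (ℓ : ℝ) / t)..(2 * π * ((ℓ : ℝ) + 1) / t), f v‖) :=
    Summable.of_nonneg_of_le (fun _ => norm_nonneg _) b3 hDsum
  refine ⟨sum1, sum2, sum3, ?_⟩
  -- norm bounds of the three tsums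
  have hT1 : ‖∑' ℓ : {ℓ : ℤ // ℓ ≠ 0},
      (f ((z + 2 * π * (ℓ.1 : ℝ)) / t) - f (2 * π * (ℓ.1 : ℝ) / t))‖ ≤ 2 * B * W := by
    refine (norm_tsum_le_tsum_norm sum1).trans ?_
    refine le_trans (Summable.tsum_le_tsum b1 sum1 hM1) ?_
    have step : ∑' ℓ : {ℓ : ℤ // ℓ ≠ 0}, 2 * B * (1 + |(ℓ.1:ℝ)| ^ α)⁻¹
        ≤ ∑' ℓ : ℤ, 2 * B * (1 + |(ℓ:ℝ)| ^ α)⁻¹ := by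
      apply Summable.tsum_le_tsum_of_inj (Subtype.val) Subtype.coe_injective
      · intro c _; positivity
      · intro i; exact le_refl _
      · exact hM1
      · exact hW.mul_left (2 * B)
    refine step.trans ?_
    rw [tsum_mul_left]
  have hT2 : ‖∑' ℓ : ℤ, f (2 * π * ((ℓ : ℝ) + 1) / t)‖ ≤ B * W1 := by
    refine (norm_tsum_le_tsum_norm sum2).trans ?_
    refine le_trans (Summable.tsum_le_tsum b2 sum2 (hW1.mul_left B)) ?_
    rw [tsum_mul_left]
  have hT3 : ‖∑' ℓ : ℤ,
      ∫ v in (2 * π * (ℓ : ℝ) / t)..(2 * π * ((ℓ : ℝ) + 1) / t), f v‖ ≤ I := by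
    refine (norm_tsum_le_tsum_norm sum3).trans ?_
    exact le_trans (Summable.tsum_le_tsum b3 sum3 hDsum) hDle
  -- coefficients
  have hc1 : |z / (2 * π)| ≤ 1 := by
    rw [abs_div, abs_of_pos (by positivity : (0:ℝ) < 2 * π), div_le_one (by positivity)]
    nlinarith
  have hc2 : |t / (2 * π)| ≤ 1 := by
    rw [abs_div, abs_of_pos (by positivity : (0:ℝ) < 2 * π), div_le_one (by positivity)]
    nlinarith
  -- assemble
  set T1 := ∑' ℓ : {ℓ : ℤ // ℓ ≠ 0},
      (f ((z + 2 * π * (ℓ.1 : ℝ)) / t) - f (2 * π * (ℓ.1 : ℝ) / t)) with hT1def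
  set T2 := ∑' ℓ : ℤ, f (2 * π * ((ℓ : ℝ) + 1) / t) with hT2def
  set T3 := ∑' ℓ : ℤ,
      ∫ v in (2 * π * (ℓ : ℝ) / t)..(2 * π * ((ℓ : ℝ) + 1) / t), f v with hT3def
  calc ‖T1 + (z / (2 * π)) • T2 - (t / (2 * π)) • T3‖
      ≤ ‖T1 + (z / (2 * π)) • T2‖ + ‖(t / (2 * π)) • T3‖ := norm_sub_le _ _
    _ ≤ ‖T1‖ + ‖(z / (2 * π)) • T2‖ + ‖(t / (2 * π)) • T3‖ := by
        have := norm_add_le T1 ((z / (2 * π)) • T2)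
        linarith
    _ = ‖T1‖ + |z / (2 * π)| * ‖T2‖ + |t / (2 * π)| * ‖T3‖ := by
        rw [norm_smul, norm_smul, Real.norm_eq_abs, Real.norm_eq_abs]
    _ ≤ 2 * B * W + 1 * (B * W1) + 1 * I := by
        have h2 : |z / (2 * π)| * ‖T2‖ ≤ 1 * (B * W1) :=
          mul_le_mul hc1 hT2 (norm_nonneg _) one_pos.le
        have h3 : |t / (2 * π)| * ‖T3‖ ≤ 1 * I :=
          mul_le_mul hc2 hT3 (norm_nonneg _) one_pos.le
        linarith
    _ ≤ 2 * B * W + B * W1 + I + 1 := by linarith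
end

section
/- Let E : ℝ × [0,∞) → ℝ be continuous with |E(z,t)| ≤ M e^{−γ t} for constants M, γ > 0. Fix t ≥ 0, z, v ∈ ℝ, and suppose (Z(s), V(s)) solves Z'(s) = −s E(Z(s)+V(s)s, s), V'(s) = E(Z(s)+V(s)s, s) for s ≥ t with Z(t) = z, V(t) = v. Then the limits Z_∞ = lim_{s→∞} Z(s) and V_∞ = lim_{s→∞} V(s) exist, and |V_∞ − v| ≤ (M/γ) e^{−γ t} and |Z_∞ − z| ≤ C M (t+1) e^{−γ t} for a constant C depending only on γ. -/
open Real Filter MeasureTheory Set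

lemma exp_decay_tendsto {γ : ℝ} (hγ : 0 < γ) :
    Tendsto (fun x : ℝ => Real.exp (-γ * x)) atTop (nhds 0) :=
  tendsto_exp_atBot.comp (tendsto_id.const_mul_atTop_of_neg (neg_neg_iff_pos.2 hγ))

lemma mul_exp_decay_tendsto {γ : ℝ} (hγ : 0 < γ) :
    Tendsto (fun x : ℝ => x * Real.exp (-γ * x)) atTop (nhds 0) := by
  have h1 : Tendsto (fun y : ℝ => y * Real.exp (-y)) atTop (nhds 0) := by
    simpa using Real.tendsto_pow_mul_exp_neg_atTop_nhds_zero 1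
  have h2 : Tendsto (fun x : ℝ => γ * x) atTop atTop :=
    tendsto_id.const_mul_atTop hγ
  have := (h1.comp h2).const_mul (1/γ)
  simp only [mul_zero] at this
  convert this using 2 with x
  field_simp
  ring_nf
  simp only [Function.comp_apply]
  ring_nf

lemma hasDerivAt_neg_exp_div {γ : ℝ} (hγ : 0 < γ) (x : ℝ) :
    HasDerivAt (fun y : ℝ => -Real.exp (-γ * y) / γ) (Real.exp (-γ * x)) x := by
  have h : HasDerivAt (fun y : ℝ => -Real.exp (-γ * y) / γ) (-(Real.exp (-γ * x) * (-γ * 1)) / γ) x :=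
    (((hasDerivAt_id x).const_mul (-γ)).exp.neg).div_const γ
  convert h using 1
  field_simp

lemma hasDerivAt_F {γ : ℝ} (hγ : 0 < γ) (x : ℝ) :
    HasDerivAt (fun y : ℝ => -((y/γ + 1/γ^2) * Real.exp (-γ * y)))
      (x * Real.exp (-γ * x)) x := by
  have h1 : HasDerivAt (fun y : ℝ => y/γ + 1/γ^2) (1/γ) x :=
    ((hasDerivAt_id x).div_const γ).add_const _
  have h2 : HasDerivAt (fun y : ℝ => Real.exp (-γ * y)) (Real.exp (-γ * x) * (-γ)) x := by
    have := ((hasDerivAt_id x).const_mul (-γ)).exp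
    simpa [mul_comm] using this
  have h : HasDerivAt (fun y : ℝ => -((y/γ + 1/γ^2) * Real.exp (-γ * y))) (-(1 / γ * rexp (-γ * x) + (x / γ + 1 / γ ^ 2) * (rexp (-γ * x) * -γ))) x := (h1.mul h2).neg
  convert h using 1
  field_simp
  ring

lemma tendsto_F {γ : ℝ} (hγ : 0 < γ) :
    Tendsto (fun y : ℝ => -((y/γ + 1/γ^2) * Real.exp (-γ * y))) atTop (nhds 0) := by
  have h := (((mul_exp_decay_tendsto hγ).const_mul (1/γ)).add
    ((exp_decay_tendsto hγ).const_mul (1/γ^2))).neg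
  simp only [mul_zero, add_zero, neg_zero] at h
  convert h using 2 with x
  ring

lemma integral_exp_Ioi {γ : ℝ} (hγ : 0 < γ) (t : ℝ) :
    ∫ x in Ioi t, Real.exp (-γ * x) = Real.exp (-γ * t) / γ := by
  have h := integral_Ioi_of_hasDerivAt_of_tendsto' (a := t)
    (fun x _ => hasDerivAt_neg_exp_div hγ x) (exp_neg_integrableOn_Ioi t hγ)
    (by simpa using ((exp_decay_tendsto hγ).neg.div_const γ))
  rw [h]; ring

lemma mul_exp_integrableOn {γ t : ℝ} (hγ : 0 < γ) (ht : 0 ≤ t) :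
    IntegrableOn (fun x : ℝ => x * Real.exp (-γ * x)) (Ioi t) := by
  exact integrableOn_Ioi_deriv_of_nonneg' (fun x _ => hasDerivAt_F hγ x)
    (fun x hx => mul_nonneg (le_trans ht (le_of_lt hx)) (Real.exp_pos _).le)
    (tendsto_F hγ)

lemma integral_mul_exp_Ioi {γ t : ℝ} (hγ : 0 < γ) (ht : 0 ≤ t) :
    ∫ x in Ioi t, x * Real.exp (-γ * x) = (t/γ + 1/γ^2) * Real.exp (-γ * t) := by
  have h := integral_Ioi_of_hasDerivAt_of_tendsto' (a := t)
    (fun x _ => hasDerivAt_F hγ x) (mul_exp_integrableOn hγ ht) (tendsto_F hγ)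
  rw [h]; ring

/-- estimates on the characteristics at infinity for an
exponentially decaying field: the limits Z_∞, V_∞ exist and satisfy
|V_∞ − v| ≤ (M/γ)e^{−γt}, |Z_∞ − z| ≤ C M (t+1) e^{−γt}. -/
theorem characteristics_at_infinity
    (M γ : ℝ) (hM : 0 < M) (hγ : 0 < γ) :
    ∃ C > 0, ∀ E : ℝ → ℝ → ℝ,
      Continuous (fun p : ℝ × ℝ => E p.1 p.2) →
      (∀ z t : ℝ, 0 ≤ t → |E z t| ≤ M * Real.exp (-γ * t)) →
      ∀ t z v : ℝ, 0 ≤ t → ∀ Z V : ℝ → ℝ,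
        Z t = z → V t = v →
        (∀ s : ℝ, t ≤ s → HasDerivAt Z (-(s * E (Z s + V s * s) s)) s) →
        (∀ s : ℝ, t ≤ s → HasDerivAt V (E (Z s + V s * s) s) s) →
        ∃ Zinf Vinf : ℝ,
          Tendsto Z atTop (nhds Zinf) ∧ Tendsto V atTop (nhds Vinf) ∧
          |Vinf - v| ≤ (M / γ) * Real.exp (-γ * t) ∧
          |Zinf - z| ≤ C * M * (t + 1) * Real.exp (-γ * t) := by
  refine ⟨1/γ + 1/γ^2, by positivity, ?_⟩
  intro E hEc hEb t z v ht Z V hZt hVt hZd hVd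
  set fV : ℝ → ℝ := fun s => E (Z s + V s * s) s with hfV
  set fZ : ℝ → ℝ := fun s => -(s * fV s) with hfZ
  -- continuity
  have hVc : ContinuousOn V (Ici t) := fun s hs => (hVd s hs).continuousAt.continuousWithinAt
  have hZc : ContinuousOn Z (Ici t) := fun s hs => (hZd s hs).continuousAt.continuousWithinAt
  have hfVc : ContinuousOn fV (Ici t) := by
    have : ContinuousOn (fun s : ℝ => (Z s + V s * s, s)) (Ici t) :=
      (hZc.add (hVc.mul continuousOn_id)).prodMk continuousOn_id
    exact hEc.comp_continuousOn this
  have hfZc : ContinuousOn fZ (Ici t) := (continuousOn_id.mul hfVc).neg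
  -- pointwise bounds
  have hbV : ∀ s ∈ Ioi t, ‖fV s‖ ≤ M * Real.exp (-γ * s) := by
    intro s hs
    simpa [Real.norm_eq_abs] using hEb (Z s + V s * s) s (le_trans ht (le_of_lt hs))
  have hbZ : ∀ s ∈ Ioi t, ‖fZ s‖ ≤ M * (s * Real.exp (-γ * s)) := by
    intro s hs
    have hs0 : 0 ≤ s := le_trans ht (le_of_lt hs)
    have := hbV s hs
    calc ‖fZ s‖ = s * ‖fV s‖ := by
          simp [hfZ, abs_mul, Real.norm_eq_abs, abs_of_nonneg hs0]
      _ ≤ s * (M * Real.exp (-γ * s)) := by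
          exact mul_le_mul_of_nonneg_left this hs0
      _ = M * (s * Real.exp (-γ * s)) := by ring
  -- integrability
  have hexpI : IntegrableOn (fun x : ℝ => M * Real.exp (-γ * x)) (Ioi t) :=
    (exp_neg_integrableOn_Ioi t hγ).const_mul M
  have hmulI : IntegrableOn (fun x : ℝ => M * (x * Real.exp (-γ * x))) (Ioi t) :=
    (mul_exp_integrableOn hγ ht).const_mul M
  have hfVi : IntegrableOn fV (Ioi t) :=
    Integrable.mono' hexpI
      ((hfVc.mono Ioi_subset_Ici_self).aestronglyMeasurable measurableSet_Ioi)
      ((ae_restrict_iff' measurableSet_Ioi).2 (Filter.Eventually.of_forall hbV))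
  have hfZi : IntegrableOn fZ (Ioi t) :=
    Integrable.mono' hmulI
      ((hfZc.mono Ioi_subset_Ici_self).aestronglyMeasurable measurableSet_Ioi)
      ((ae_restrict_iff' measurableSet_Ioi).2 (Filter.Eventually.of_forall hbZ))
  -- existence of limits
  have hVtend : Tendsto V atTop (nhds (limUnder atTop V)) :=
    tendsto_limUnder_of_hasDerivAt_of_integrableOn_Ioi
      (fun x hx => hVd x (le_of_lt hx)) hfVi
  have hZtend : Tendsto Z atTop (nhds (limUnder atTop Z)) :=
    tendsto_limUnder_of_hasDerivAt_of_integrableOn_Ioi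
      (fun x hx => hZd x (le_of_lt hx)) hfZi
  refine ⟨limUnder atTop Z, limUnder atTop V, hZtend, hVtend, ?_, ?_⟩
  · -- V estimate
    have hint : ∫ x in Ioi t, fV x = limUnder atTop V - v := by
      rw [← hVt]
      exact integral_Ioi_of_hasDerivAt_of_tendsto (hVc t self_mem_Ici)
        (fun x hx => hVd x (le_of_lt hx)) hfVi hVtend
    have hle : ‖∫ x in Ioi t, fV x‖ ≤ ∫ x in Ioi t, M * Real.exp (-γ * x) :=
      norm_integral_le_of_norm_le hexpI
        ((ae_restrict_iff' measurableSet_Ioi).2 (Filter.Eventually.of_forall hbV))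
    rw [hint, Real.norm_eq_abs] at hle
    have : ∫ x in Ioi t, M * Real.exp (-γ * x) = M / γ * Real.exp (-γ * t) := by
      rw [MeasureTheory.integral_const_mul, integral_exp_Ioi hγ]; ring
    linarith [hle, this.le, this.ge]
  · -- Z estimate
    have hint : ∫ x in Ioi t, fZ x = limUnder atTop Z - z := by
      rw [← hZt]
      exact integral_Ioi_of_hasDerivAt_of_tendsto (hZc t self_mem_Ici)
        (fun x hx => hZd x (le_of_lt hx)) hfZi hZtend
    have hle : ‖∫ x in Ioi t, fZ x‖ ≤ ∫ x in Ioi t, M * (x * Real.exp (-γ * x)) :=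
      norm_integral_le_of_norm_le hmulI
        ((ae_restrict_iff' measurableSet_Ioi).2 (Filter.Eventually.of_forall hbZ))
    rw [hint, Real.norm_eq_abs] at hle
    have hval : ∫ x in Ioi t, M * (x * Real.exp (-γ * x))
        = M * ((t/γ + 1/γ^2) * Real.exp (-γ * t)) := by
      rw [MeasureTheory.integral_const_mul, integral_mul_exp_Ioi hγ ht]
    rw [hval] at hle
    have hexp : 0 < Real.exp (-γ * t) := Real.exp_pos _
    have hγ2 : 0 < γ^2 := by positivity
    refine hle.trans ?_
    have key : t/γ + 1/γ^2 ≤ (1/γ + 1/γ^2) * (t + 1) := by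
      have h2 : 0 ≤ 1/γ := by positivity
      have h3 : 0 ≤ t/γ^2 := by positivity
      have hexpand : (1/γ + 1/γ^2) * (t + 1) = t/γ + 1/γ^2 + (1/γ + t/γ^2) := by ring
      linarith
    calc M * ((t/γ + 1/γ^2) * Real.exp (-γ * t))
        ≤ M * ((1/γ + 1/γ^2) * (t + 1) * Real.exp (-γ * t)) := by
          apply mul_le_mul_of_nonneg_left _ hM.le
          exact mul_le_mul_of_nonneg_right key hexp.le
      _ = (1/γ + 1/γ^2) * M * (t + 1) * Real.exp (-γ * t) := by ring
end
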